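/- arXiv:2108.04522 — 3 statements merged into one kernel-verified Lean document; each statement's English description precedes it below -/
import Mathlib

section
/- Let n ≥ 2, let Ω be a bounded domain with smooth boundary contained in the first orthant ℝ*^n, and let p > 1. Then for every φ ∈ C_0^∞(Ω), ∫_Ω |x|^p (x_1 x_2⋯x_n) |∇φ|^p dx ≥ (2n/p)^p ∫_Ω (x_1 x_2⋯x_n) |φ|^p dx, where |x| = (x_1^2 + ⋯ + x_n^2)^{1/2}. -/
open MeasureTheory Filter Topology

lemma stmt3_tendsto_abs_rpow_zero {p : ℝ} (hp : 0 < p) :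
    Tendsto (fun t : ℝ => |t| ^ p) (𝓝 0) (𝓝 0) := by
  have h : ContinuousAt (fun s : ℝ => s ^ p) |0| := by
    simpa using Real.continuousAt_rpow_const 0 p (Or.inr hp.le)
  have := h.comp (continuous_abs.continuousAt (x := (0:ℝ)))
  simpa [Function.comp_def, Real.zero_rpow hp.ne'] using this.tendsto

lemma stmt3_abs_q' {p : ℝ} (hp : 1 < p) (t : ℝ) :
    |p * |t| ^ (p - 2) * t| = p * |t| ^ (p - 1) := by
  rcases eq_or_ne t 0 with rfl | ht
  · simp [Real.zero_rpow (by linarith : p - 1 ≠ 0)]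
  · have habs : (0:ℝ) < |t| := abs_pos.2 ht
    rw [abs_mul, abs_mul, abs_of_nonneg (by positivity : (0:ℝ) ≤ p),
      abs_of_nonneg (Real.rpow_nonneg (abs_nonneg t) _)]
    rw [mul_assoc, ← Real.rpow_add_one habs.ne']
    ring_nf

lemma stmt3_continuous_q' {p : ℝ} (hp : 1 < p) :
    Continuous (fun t : ℝ => p * |t| ^ (p - 2) * t) := by
  rw [continuous_iff_continuousAt]
  intro t
  rcases eq_or_ne t 0 with rfl | ht
  · have h0 : p * |(0:ℝ)| ^ ((p:ℝ) - 2) * 0 = 0 := by ring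
    rw [ContinuousAt, h0]
    apply squeeze_zero_norm (a := fun s : ℝ => p * |s| ^ (p - 1))
    · intro s
      rw [Real.norm_eq_abs, stmt3_abs_q' hp s]
    · have := (stmt3_tendsto_abs_rpow_zero (by linarith : (0:ℝ) < p - 1)).const_mul p
      simpa using this
  · have habs : ContinuousAt (fun s : ℝ => s ^ (p - 2)) |t| :=
      Real.continuousAt_rpow_const _ _ (Or.inl (abs_ne_zero.2 ht))
    exact (continuousAt_const.mul (habs.comp (continuous_abs.continuousAt))).mul continuousAt_id

/-- Integral of a directional derivative of a compactly supported Lipschitz function vanishes. -/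
lemma stmt3_integral_lineDeriv_eq_zero {E : Type*} [NormedAddCommGroup E] [NormedSpace ℝ E]
    [MeasurableSpace E] [BorelSpace E] [FiniteDimensional ℝ E]
    (μ : Measure E) [μ.IsAddHaarMeasure] {g : E → ℝ} {D : NNReal}
    (hg : LipschitzWith D g) (h'g : HasCompactSupport g) (v : E) :
    ∫ x, lineDeriv ℝ g x v ∂μ = 0 := by
  have h := LipschitzWith.integral_lineDeriv_mul_eq (μ := μ)
    (LipschitzWith.const (1:ℝ)) hg h'g (-v)
  have hc : ∀ (x w : E), lineDeriv ℝ (fun _ : E => (1:ℝ)) x w = 0 := fun x w => by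
    simp [lineDeriv]
  simp only [hc, zero_mul, integral_zero, neg_neg, mul_one] at h
  exact h.symm

set_option maxHeartbeats 1000000 in
theorem stmt3 (n : ℕ) (hn : 2 ≤ n)
    (Ω : Set (EuclideanSpace ℝ (Fin n)))
    (hΩo : IsOpen Ω) (hΩc : IsConnected Ω) (hΩb : Bornology.IsBounded Ω)
    (hΩ : Ω ⊆ {x : EuclideanSpace ℝ (Fin n) | ∀ i, 0 < x i})
    (p : ℝ) (hp : 1 < p)
    (φ : EuclideanSpace ℝ (Fin n) → ℝ)
    (hφ : ContDiff ℝ (⊤ : ℕ∞) φ) (hφc : HasCompactSupport φ) (hφΩ : tsupport φ ⊆ Ω) :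
    ∫ x in Ω, ‖x‖ ^ p * (∏ i, x i) * ‖gradient φ x‖ ^ p ≥
      (2 * n / p) ^ p * ∫ x in Ω, (∏ i, x i) * |φ x| ^ p := by
  classical
  have hp0 : (0:ℝ) < p := by linarith
  -- basic objects
  set q' : ℝ → ℝ := fun t => p * |t| ^ (p - 2) * t with hq'def
  set ψ : EuclideanSpace ℝ (Fin n) → ℝ := fun x => |φ x| ^ p with hψdef
  set W : EuclideanSpace ℝ (Fin n) → ℝ := fun x => ∏ i, x i with hWdef
  set e : Fin n → EuclideanSpace ℝ (Fin n) := fun i => EuclideanSpace.single i (1:ℝ) with hedef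
  have hq'0 : q' 0 = 0 := by simp [hq'def]
  have hψ_of_zero : ∀ {t : ℝ}, t = 0 → |t| ^ p = 0 := by
    intro t ht; rw [ht]; simp [Real.zero_rpow hp0.ne']
  -- smoothness facts
  have hφcont : Continuous φ := hφ.continuous
  have hφd : Differentiable ℝ φ := hφ.differentiable (by simp)
  have hfc : Continuous (fderiv ℝ φ) := hφ.continuous_fderiv (by simp)
  have hWsm : ContDiff ℝ 1 W := by
    apply contDiff_prod (f := fun (i : Fin n) (x : EuclideanSpace ℝ (Fin n)) => x i)
    intro i _
    exact (EuclideanSpace.proj (𝕜 := ℝ) (i : Fin n)).contDiff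
  have hψC1 : ContDiff ℝ 1 ψ := by
    have := (hφ.of_le (by simp) : ContDiff ℝ 1 φ).norm_rpow hp
    simpa [hψdef, Real.norm_eq_abs] using this
  have hψcs : HasCompactSupport ψ := by
    apply HasCompactSupport.intro hφc
    intro x hx
    exact hψ_of_zero (image_eq_zero_of_notMem_tsupport hx)
  -- G i and its properties
  set G : Fin n → EuclideanSpace ℝ (Fin n) → ℝ := fun i x => x i * W x * ψ x with hGdef
  set Dfun : Fin n → EuclideanSpace ℝ (Fin n) → ℝ :=
    fun i x => 2 * (W x * ψ x) + x i * W x * (q' (φ x) * fderiv ℝ φ x (e i)) with hDdef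
  have hGsm : ∀ i, ContDiff ℝ 1 (G i) := fun i =>
    (((EuclideanSpace.proj (𝕜 := ℝ) i).contDiff).mul hWsm).mul hψC1
  have hGcs : ∀ i, HasCompactSupport (G i) := by
    intro i
    apply HasCompactSupport.intro hφc
    intro x hx
    simp [hGdef, hψdef, hψ_of_zero (image_eq_zero_of_notMem_tsupport hx)]
  have hkey1 : ∀ i, ∫ x, lineDeriv ℝ (G i) x (e i) = 0 := by
    intro i
    obtain ⟨K, hK⟩ := ContDiff.lipschitzWith_of_hasCompactSupport (hGcs i) (hGsm i) one_ne_zero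
    exact stmt3_integral_lineDeriv_eq_zero volume hK (hGcs i) (e i)
  -- pointwise computation of the line derivative
  have hlineG : ∀ i x, lineDeriv ℝ (G i) x (e i) = Dfun i x := by
    intro i x
    set P : ℝ := ∏ j ∈ Finset.univ.erase i, x j with hPdef
    have hxiP : x i * P = W x := Finset.mul_prod_erase Finset.univ _ (Finset.mem_univ i)
    have hcoord : ∀ (t : ℝ) (j : Fin n), (x + t • e i) j = x j + (if j = i then t else 0) := by
      intro t j
      simp [hedef, EuclideanSpace.single_apply, PiLp.add_apply, PiLp.smul_apply, mul_ite]
    have hWline : ∀ t : ℝ, W (x + t • e i) = (x i + t) * P := by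
      intro t
      rw [hWdef]
      simp only []
      rw [← Finset.mul_prod_erase Finset.univ _ (Finset.mem_univ i), hcoord t i, if_pos rfl]
      congr 1
      refine Finset.prod_congr rfl fun j hj => ?_
      rw [hcoord t j, if_neg (Finset.mem_erase.1 hj).1, add_zero]
    have hGline : ∀ t : ℝ, G i (x + t • e i) =
        (x i + t) * ((x i + t) * P) * |φ (x + t • e i)| ^ p := by
      intro t
      simp only [hGdef, hψdef]
      rw [hWline t, hcoord t i, if_pos rfl]
    have h0x : x + (0:ℝ) • e i = x := by simp
    have hvline : HasDerivAt (fun t : ℝ => x + t • e i) (e i) 0 := by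
      have := ((hasDerivAt_id (0:ℝ)).smul_const (e i)).const_add x
      simpa using this
    have hφline : HasDerivAt (fun t : ℝ => φ (x + t • e i)) (fderiv ℝ φ x (e i)) 0 := by
      have hl : HasFDerivAt φ (fderiv ℝ φ x) (x + (0:ℝ) • e i) := by
        rw [h0x]; exact (hφd x).hasFDerivAt
      have := hl.comp_hasDerivAt 0 hvline
      simpa [Function.comp_def] using this
    have hqline : HasDerivAt (fun t : ℝ => |φ (x + t • e i)| ^ p)
        (q' (φ x) * fderiv ℝ φ x (e i)) 0 := by
      have habs : HasDerivAt (fun s : ℝ => |s| ^ p) (p * |φ x| ^ (p - 2) * φ x)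
          (φ (x + (0:ℝ) • e i)) := by
        rw [h0x]; exact hasDerivAt_abs_rpow (φ x) hp
      have := habs.comp (0:ℝ) hφline
      simpa [Function.comp_def, Function.comp, hq'def] using this
    have hpoly : HasDerivAt (fun t : ℝ => (x i + t) * ((x i + t) * P))
        (1 * ((x i + 0) * P) + (x i + 0) * (1 * P)) 0 :=
      ((hasDerivAt_id (0:ℝ)).const_add (x i)).mul
        (((hasDerivAt_id (0:ℝ)).const_add (x i)).mul_const P)
    have hfull : HasDerivAt (fun t : ℝ => G i (x + t • e i))
        ((1 * ((x i + 0) * P) + (x i + 0) * (1 * P)) * |φ (x + (0:ℝ) • e i)| ^ p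
          + ((x i + 0) * ((x i + 0) * P)) * (q' (φ x) * fderiv ℝ φ x (e i))) 0 := by
      have := hpoly.mul hqline
      refine HasDerivAt.congr_of_eventuallyEq this (Eventually.of_forall fun t => ?_)
      exact hGline t
    have hhld : HasLineDerivAt ℝ (G i) (Dfun i x) x (e i) := by
      have heq : (1 * ((x i + 0) * P) + (x i + 0) * (1 * P)) * |φ (x + (0:ℝ) • e i)| ^ p
          + ((x i + 0) * ((x i + 0) * P)) * (q' (φ x) * fderiv ℝ φ x (e i)) = Dfun i x := by
        rw [h0x, hDdef]
        simp only [hψdef]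
        rw [← hxiP]
        ring
      rw [HasLineDerivAt, ← heq]
      exact hfull
    exact hhld.lineDeriv
  -- continuity and integrability of the divergence terms
  have hWcont : Continuous W := hWsm.continuous
  have hψcont : Continuous ψ := hψC1.continuous
  have hq'phi : Continuous fun x : EuclideanSpace ℝ (Fin n) => q' (φ x) :=
    (stmt3_continuous_q' hp).comp hφcont
  have hDφe_cont : ∀ i, Continuous fun x : EuclideanSpace ℝ (Fin n) => fderiv ℝ φ x (e i) :=
    fun i => hfc.clm_apply continuous_const
  have hcoordcont : ∀ i, Continuous fun x : EuclideanSpace ℝ (Fin n) => x i :=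
    fun i => (EuclideanSpace.proj (𝕜 := ℝ) i).continuous
  have hDcont : ∀ i, Continuous (Dfun i) := by
    intro i
    rw [hDdef]
    exact (continuous_const.mul (hWcont.mul hψcont)).add
      (((hcoordcont i).mul hWcont).mul (hq'phi.mul (hDφe_cont i)))
  have hDcs : ∀ i, HasCompactSupport (Dfun i) := by
    intro i
    apply HasCompactSupport.intro hφc
    intro x hx
    have h1 : φ x = 0 := image_eq_zero_of_notMem_tsupport hx
    simp [hDdef, hψdef, h1, hq'0, Real.zero_rpow hp0.ne']
  have hDint : ∀ i, Integrable (Dfun i) :=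
    fun i => (hDcont i).integrable_of_hasCompactSupport (hDcs i)
  have hint_eq : ∀ i, ∫ x, Dfun i x = 0 := by
    intro i
    have h : (fun x => lineDeriv ℝ (G i) x (e i)) = Dfun i := funext (hlineG i)
    rw [← h]
    exact hkey1 i
  have htotal : ∫ x, (∑ i, Dfun i x) = 0 := by
    rw [integral_finset_sum _ (fun i _ => hDint i)]
    simp [hint_eq]
  -- pointwise identity for the sum
  have hrepr : ∀ x : EuclideanSpace ℝ (Fin n), ∑ i, x i • e i = x := by
    intro x
    have h := (EuclideanSpace.basisFun (Fin n) ℝ).sum_repr x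
    simpa [hedef, EuclideanSpace.basisFun_apply, EuclideanSpace.basisFun_repr] using h
  have hsumD : ∀ x, ∑ i, Dfun i x
      = 2 * n * (W x * ψ x) + W x * (q' (φ x) * fderiv ℝ φ x x) := by
    intro x
    have h1 : ∑ i, Dfun i x = (∑ _i : Fin n, 2 * (W x * ψ x))
        + ∑ i, x i * W x * (q' (φ x) * fderiv ℝ φ x (e i)) := by
      simp [hDdef, Finset.sum_add_distrib]
    rw [h1, Finset.sum_const, Finset.card_univ, Fintype.card_fin]
    have h2 : ∀ i, x i * W x * (q' (φ x) * fderiv ℝ φ x (e i))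
        = (W x * q' (φ x)) * fderiv ℝ φ x (x i • e i) := by
      intro i
      rw [_root_.map_smul]
      simp only [smul_eq_mul]
      ring
    rw [Finset.sum_congr rfl (fun i _ => h2 i), ← Finset.mul_sum, ← map_sum, hrepr x]
    rw [nsmul_eq_mul]
    ring
  -- split the integral
  have hf1cont : Continuous fun x : EuclideanSpace ℝ (Fin n) => W x * ψ x := hWcont.mul hψcont
  have hf1cs : HasCompactSupport fun x : EuclideanSpace ℝ (Fin n) => W x * ψ x := by
    apply HasCompactSupport.intro hφc
    intro x hx
    simp [hψdef, image_eq_zero_of_notMem_tsupport hx, Real.zero_rpow hp0.ne']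
  have hf1int : Integrable fun x : EuclideanSpace ℝ (Fin n) => W x * ψ x :=
    hf1cont.integrable_of_hasCompactSupport hf1cs
  have hf2cont : Continuous fun x : EuclideanSpace ℝ (Fin n)
      => W x * (q' (φ x) * fderiv ℝ φ x x) :=
    hWcont.mul (hq'phi.mul (hfc.clm_apply continuous_id))
  have hf2cs : HasCompactSupport fun x : EuclideanSpace ℝ (Fin n)
      => W x * (q' (φ x) * fderiv ℝ φ x x) := by
    apply HasCompactSupport.intro hφc
    intro x hx
    have h1 : φ x = 0 := image_eq_zero_of_notMem_tsupport hx
    simp [h1, hq'0]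
  have hf2int : Integrable fun x : EuclideanSpace ℝ (Fin n)
      => W x * (q' (φ x) * fderiv ℝ φ x x) :=
    hf2cont.integrable_of_hasCompactSupport hf2cs
  have hsplit : 2 * n * (∫ x, W x * ψ x)
      + ∫ x, W x * (q' (φ x) * fderiv ℝ φ x x) = 0 := by
    have h1 : ∫ x, (∑ i, Dfun i x)
        = ∫ x, (2 * n * (W x * ψ x) + W x * (q' (φ x) * fderiv ℝ φ x x)) := by
      exact integral_congr_ae (Eventually.of_forall fun x => hsumD x)
    rw [h1, integral_add (hf1int.const_mul _) hf2int, MeasureTheory.integral_const_mul] at htotal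
    exact htotal
  -- gradient facts
  have hgrad_eq : ∀ (x v : EuclideanSpace ℝ (Fin n)),
      fderiv ℝ φ x v = inner ℝ (gradient φ x) v := by
    intro x v
    show fderiv ℝ φ x v =
      inner ℝ ((InnerProductSpace.toDual ℝ _).symm (fderiv ℝ φ x)) v
    rw [InnerProductSpace.toDual_symm_apply]
  have hgradcont : Continuous fun x : EuclideanSpace ℝ (Fin n) => gradient φ x := by
    show Continuous fun x : EuclideanSpace ℝ (Fin n) =>
      (InnerProductSpace.toDual ℝ _).symm (fderiv ℝ φ x)
    exact (InnerProductSpace.toDual ℝ _).symm.continuous.comp hfc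
  have hgrad0 : ∀ x, x ∉ tsupport φ → gradient φ x = 0 := by
    intro x hx
    have h1 : fderiv ℝ φ x = 0 := by
      by_contra h
      exact hx (support_fderiv_subset ℝ (Function.mem_support.2 h))
    show (InnerProductSpace.toDual ℝ _).symm (fderiv ℝ φ x) = 0
    rw [h1, map_zero]
  -- pass to set integrals over Ω
  set A : ℝ := ∫ x in Ω, W x * ψ x with hAdef
  clear_value A
  have hnotΩ : ∀ x, x ∉ Ω → φ x = 0 := fun x hx =>
    image_eq_zero_of_notMem_tsupport fun hm => hx (hφΩ hm)
  have hAset : A = ∫ x, W x * ψ x := by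
    rw [hAdef]
    apply setIntegral_eq_integral_of_forall_compl_eq_zero
    intro x hx
    simp [hψdef, hnotΩ x hx, Real.zero_rpow hp0.ne']
  have hTset : ∫ x in Ω, W x * (q' (φ x) * fderiv ℝ φ x x)
      = ∫ x, W x * (q' (φ x) * fderiv ℝ φ x x) := by
    apply setIntegral_eq_integral_of_forall_compl_eq_zero
    intro x hx
    simp [hnotΩ x hx, hq'0]
  have hkey2 : 2 * n * A = - ∫ x in Ω, W x * (q' (φ x) * fderiv ℝ φ x x) := by
    rw [hAset, hTset]
    linarith [hsplit]
  -- Hölder setup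
  have hpq : p.HolderConjugate (p / (p - 1)) :=
    (Real.holderConjugate_iff_eq_conjExponent hp).2 rfl
  set p2 : ℝ := p / (p - 1) with hp2def
  clear_value p2
  have hp2pos : 0 < p2 := hpq.symm.pos
  have hp2mul : (p - 1) * p2 = p := hpq.sub_one_mul_conj
  set fh : EuclideanSpace ℝ (Fin n) → ℝ :=
    fun x => |W x| ^ (1/p) * (‖x‖ * ‖gradient φ x‖) with hfhdef
  set gh : EuclideanSpace ℝ (Fin n) → ℝ :=
    fun x => |W x| ^ (1/p2) * |φ x| ^ (p - 1) with hghdef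
  clear_value fh gh
  have habsW : Continuous fun x : EuclideanSpace ℝ (Fin n) => |W x| := hWcont.abs
  have hfhcont : Continuous fh := by
    rw [hfhdef]
    exact (habsW.rpow_const fun x => Or.inr (by positivity)).mul
      (continuous_norm.mul hgradcont.norm)
  have hghcont : Continuous gh := by
    rw [hghdef]
    exact (habsW.rpow_const fun x => Or.inr (by positivity)).mul
      ((hφcont.abs).rpow_const fun x => Or.inr (by linarith))
  have hfhcs : HasCompactSupport fh := by
    apply HasCompactSupport.intro hφc
    intro x hx
    simp [hfhdef, hgrad0 x hx]
  have hghcs : HasCompactSupport gh := by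
    apply HasCompactSupport.intro hφc
    intro x hx
    simp [hghdef, image_eq_zero_of_notMem_tsupport hx,
      Real.zero_rpow (by linarith : p - 1 ≠ 0)]
  have hfhmem : MemLp fh (ENNReal.ofReal p) (volume.restrict Ω) :=
    (hfhcont.memLp_of_hasCompactSupport hfhcs).restrict _
  have hghmem : MemLp gh (ENNReal.ofReal p2) (volume.restrict Ω) :=
    (hghcont.memLp_of_hasCompactSupport hghcs).restrict _
  have hfh0 : ∀ x, 0 ≤ fh x := by
    intro x
    rw [hfhdef]
    positivity
  have hgh0 : ∀ x, 0 ≤ gh x := by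
    intro x
    rw [hghdef]
    positivity
  have hHolder : ∫ x in Ω, fh x * gh x
      ≤ (∫ x in Ω, fh x ^ p) ^ (1/p) * (∫ x in Ω, gh x ^ p2) ^ (1/p2) :=
    integral_mul_le_Lp_mul_Lq_of_nonneg hpq (Eventually.of_forall hfh0)
      (Eventually.of_forall hgh0) hfhmem hghmem
  -- pointwise bound on Ω
  have hbound : ∀ x ∈ Ω, |W x * (q' (φ x) * fderiv ℝ φ x x)| ≤ p * (fh x * gh x) := by
    intro x hx
    have hWpos : 0 < W x := Finset.prod_pos fun i _ => hΩ hx i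
    have hWx : |W x| = W x := abs_of_pos hWpos
    have hsplitW : W x = |W x| ^ (1/p) * |W x| ^ (1/p2) := by
      rw [← Real.rpow_add (abs_pos.2 hWpos.ne'), one_div, one_div,
        hpq.inv_add_inv_eq_one, Real.rpow_one, hWx]
    have h1 : |q' (φ x)| = p * |φ x| ^ (p - 1) := by
      rw [hq'def]; exact stmt3_abs_q' hp (φ x)
    have h2 : |fderiv ℝ φ x x| ≤ ‖gradient φ x‖ * ‖x‖ := by
      rw [hgrad_eq x x]
      exact abs_real_inner_le_norm _ _
    calc |W x * (q' (φ x) * fderiv ℝ φ x x)|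
        = W x * (|q' (φ x)| * |fderiv ℝ φ x x|) := by
          rw [abs_mul, abs_mul, hWx]
      _ ≤ W x * ((p * |φ x| ^ (p - 1)) * (‖gradient φ x‖ * ‖x‖)) := by
          rw [h1]
          exact mul_le_mul_of_nonneg_left
            (mul_le_mul_of_nonneg_left h2 (by positivity)) hWpos.le
      _ = p * (fh x * gh x) := by
          rw [hfhdef, hghdef]
          simp only []
          nth_rewrite 1 [hsplitW]
          ring
  -- main estimate
  have hfg_cs : HasCompactSupport fun x : EuclideanSpace ℝ (Fin n) => p * (fh x * gh x) := by
    apply HasCompactSupport.intro hφc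
    intro x hx
    simp [hfhdef, hgrad0 x hx]
  have hfg_cont : Continuous fun x : EuclideanSpace ℝ (Fin n) => p * (fh x * gh x) :=
    continuous_const.mul (hfhcont.mul hghcont)
  have hfg_int : Integrable (fun x : EuclideanSpace ℝ (Fin n) => p * (fh x * gh x)) :=
    hfg_cont.integrable_of_hasCompactSupport hfg_cs
  have hstep : 2 * n * A
      ≤ p * ((∫ x in Ω, fh x ^ p) ^ (1/p) * (∫ x in Ω, gh x ^ p2) ^ (1/p2)) := by
    have h1 : - ∫ x in Ω, W x * (q' (φ x) * fderiv ℝ φ x x)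
        ≤ ∫ x in Ω, |W x * (q' (φ x) * fderiv ℝ φ x x)| := by
      refine (neg_le_abs _).trans ?_
      have := norm_integral_le_integral_norm (μ := volume.restrict Ω)
          (fun x => W x * (q' (φ x) * fderiv ℝ φ x x))
      simp only [Real.norm_eq_abs] at this
      exact this
    have h3 : ∫ x in Ω, |W x * (q' (φ x) * fderiv ℝ φ x x)|
        ≤ ∫ x in Ω, p * (fh x * gh x) := by
      apply setIntegral_mono_on hf2int.abs.integrableOn hfg_int.integrableOn
        hΩo.measurableSet
      exact hbound
    have h4 : ∫ x in Ω, p * (fh x * gh x) = p * ∫ x in Ω, fh x * gh x :=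
      MeasureTheory.integral_const_mul p _
    rw [hkey2]
    calc - ∫ x in Ω, W x * (q' (φ x) * fderiv ℝ φ x x)
        ≤ ∫ x in Ω, p * (fh x * gh x) := h1.trans h3
      _ = p * ∫ x in Ω, fh x * gh x := h4
      _ ≤ p * ((∫ x in Ω, fh x ^ p) ^ (1/p) * (∫ x in Ω, gh x ^ p2) ^ (1/p2)) :=
          mul_le_mul_of_nonneg_left hHolder hp0.le
  -- identify the two integrals
  have hLp_eq : ∫ x in Ω, fh x ^ p
      = ∫ x in Ω, ‖x‖ ^ p * W x * ‖gradient φ x‖ ^ p := by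
    apply setIntegral_congr_fun hΩo.measurableSet
    intro x hx
    have hWpos : 0 < W x := Finset.prod_pos fun i _ => hΩ hx i
    rw [hfhdef]
    simp only []
    rw [Real.mul_rpow (by positivity) (by positivity),
      ← Real.rpow_mul (abs_nonneg _), one_div, inv_mul_cancel₀ hp0.ne',
      Real.rpow_one, abs_of_pos hWpos,
      Real.mul_rpow (norm_nonneg _) (norm_nonneg _)]
    ring
  have hLq_eq : ∫ x in Ω, gh x ^ p2 = A := by
    rw [hAdef]
    apply setIntegral_congr_fun hΩo.measurableSet
    intro x hx
    have hWpos : 0 < W x := Finset.prod_pos fun i _ => hΩ hx i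
    rw [hghdef, hψdef]
    simp only []
    rw [Real.mul_rpow (by positivity) (by positivity),
      ← Real.rpow_mul (abs_nonneg _), one_div, inv_mul_cancel₀ hp2pos.ne',
      Real.rpow_one, abs_of_pos hWpos,
      ← Real.rpow_mul (abs_nonneg _), hp2mul]
  -- nonnegativity
  have hA0 : 0 ≤ A := by
    rw [hAdef]
    apply setIntegral_nonneg hΩo.measurableSet
    intro x hx
    have hWpos : 0 < W x := Finset.prod_pos fun i _ => hΩ hx i
    have : 0 ≤ ψ x := by rw [hψdef]; positivity
    exact mul_nonneg hWpos.le this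
  have hL0 : 0 ≤ ∫ x in Ω, fh x ^ p :=
    setIntegral_nonneg hΩo.measurableSet fun x _ =>
      Real.rpow_nonneg (hfh0 x) p
  -- final algebra
  rw [ge_iff_le, ← hLp_eq]
  rw [hLq_eq] at hstep
  rcases hA0.eq_or_lt with hA | hApos
  · rw [← hA, mul_zero]
    exact hL0
  · set L : ℝ := ∫ x in Ω, fh x ^ p with hLdef
    clear_value L
    have h6 : A = A ^ (1/p) * A ^ (1/p2) := by
      rw [← Real.rpow_add hApos, one_div, one_div, hpq.inv_add_inv_eq_one, Real.rpow_one]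
    have hApow : (0:ℝ) < A ^ (1/p2) := Real.rpow_pos_of_pos hApos _
    have h7 : 2 * n * A ^ (1/p) ≤ p * L ^ (1/p) := by
      have h7a : (2 * n * A ^ (1/p)) * A ^ (1/p2) ≤ (p * L ^ (1/p)) * A ^ (1/p2) := by
        calc (2 * n * A ^ (1/p)) * A ^ (1/p2) = 2 * n * (A ^ (1/p) * A ^ (1/p2)) := by ring
          _ = 2 * n * A := by rw [← h6]
          _ ≤ p * (L ^ (1/p) * A ^ (1/p2)) := hstep
          _ = (p * L ^ (1/p)) * A ^ (1/p2) := by ring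
      exact le_of_mul_le_mul_right h7a hApow
    have h8 : (2 * n / p) * A ^ (1/p) ≤ L ^ (1/p) := by
      rw [div_mul_eq_mul_div, div_le_iff₀ hp0]
      calc 2 * n * A ^ (1/p) ≤ p * L ^ (1/p) := h7
        _ = L ^ (1/p) * p := by ring
    have h9 : ((2 * n / p) * A ^ (1/p)) ^ p ≤ (L ^ (1/p)) ^ p :=
      Real.rpow_le_rpow (by positivity) h8 hp0.le
    have h10 : ((2 * n / p) * A ^ (1/p)) ^ p = (2 * n / p) ^ p * A := by
      rw [Real.mul_rpow (by positivity) (by positivity),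
        ← Real.rpow_mul hA0, one_div, inv_mul_cancel₀ hp0.ne', Real.rpow_one]
    have h11 : (L ^ (1/p)) ^ p = L := by
      rw [← Real.rpow_mul hL0, one_div, inv_mul_cancel₀ hp0.ne', Real.rpow_one]
    calc (2 * n / p) ^ p * A = ((2 * n / p) * A ^ (1/p)) ^ p := h10.symm
      _ ≤ (L ^ (1/p)) ^ p := h9
      _ = L := h11
end

section
/- Let n ≥ 2, p > 1, and R > 0, and let B_R = {x ∈ ℝ^n : |x| < R} be the open Euclidean ball of radius R centered at the origin. Then for every φ ∈ C_0^∞(B_R ∩ ℝ*^n), ∫_{B_R ∩ ℝ*^n} (x_1 x_2⋯x_n) |∇φ|^p dx ≥ (2n/(pR))^p ∫_{B_R ∩ ℝ*^n} (x_1 x_2⋯x_n) |φ|^p dx. -/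
open MeasureTheory Real

set_option maxHeartbeats 1600000

private lemma auxProdCD {n : ℕ} (s : Finset (Fin n)) :
    ContDiff ℝ 1 (fun y : EuclideanSpace ℝ (Fin n) => ∏ j ∈ s, y j) := by
  induction s using Finset.induction with
  | empty => simpa using contDiff_const
  | insert _ _ h ih =>
      simp only [Finset.prod_insert h]
      exact ((EuclideanSpace.proj (𝕜 := ℝ) _).contDiff).mul ih

private lemma auxIBP {n : ℕ} {g : EuclideanSpace ℝ (Fin n) → ℝ}
    (hg : ContDiff ℝ 1 g) (hgc : HasCompactSupport g) (v : EuclideanSpace ℝ (Fin n)) :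
    ∫ x, fderiv ℝ g x v = 0 := by
  obtain ⟨D, hD⟩ := hg.lipschitzWith_of_hasCompactSupport hgc one_ne_zero
  have key := LipschitzWith.integral_lineDeriv_mul_eq (μ := volume)
    (LipschitzWith.const (1 : ℝ)) hD hgc v
  have h1 : ∀ x : EuclideanSpace ℝ (Fin n),
      lineDeriv ℝ (fun _ : EuclideanSpace ℝ (Fin n) => (1:ℝ)) x v = 0 := by
    intro x
    rw [(differentiableAt_const (1:ℝ)).lineDeriv_eq_fderiv]
    simp
  have h2 : ∀ x : EuclideanSpace ℝ (Fin n),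
      lineDeriv ℝ g x (-v) * 1 = -(fderiv ℝ g x v) := by
    intro x
    rw [mul_one, ((hg.differentiable one_ne_zero) x).lineDeriv_eq_fderiv, map_neg]
  simp only [h1, zero_mul, integral_zero, h2, integral_neg] at key
  linarith

theorem stmt4 (n : ℕ) (hn : 2 ≤ n) (p R : ℝ) (hp : 1 < p) (hR : 0 < R)
    (φ : EuclideanSpace ℝ (Fin n) → ℝ)
    (hφ : ContDiff ℝ (⊤ : ℕ∞) φ) (hφc : HasCompactSupport φ)
    (hφΩ : tsupport φ ⊆ Metric.ball (0 : EuclideanSpace ℝ (Fin n)) R ∩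
      {x : EuclideanSpace ℝ (Fin n) | ∀ i, 0 < x i}) :
    ∫ x in Metric.ball (0 : EuclideanSpace ℝ (Fin n)) R ∩
        {x : EuclideanSpace ℝ (Fin n) | ∀ i, 0 < x i},
      (∏ i, x i) * ‖gradient φ x‖ ^ p ≥
      (2 * n / (p * R)) ^ p *
        ∫ x in Metric.ball (0 : EuclideanSpace ℝ (Fin n)) R ∩
            {x : EuclideanSpace ℝ (Fin n) | ∀ i, 0 < x i},
          (∏ i, x i) * |φ x| ^ p := by
  classical
  have hp0 : (0:ℝ) < p := lt_trans one_pos hp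
  have hp1 : (0:ℝ) < p - 1 := by linarith
  have hn0 : (0:ℝ) < (n:ℝ) := by
    have : (2:ℝ) ≤ (n:ℝ) := by exact_mod_cast hn
    linarith
  -- basic vanishing facts
  have hzero : ∀ x, x ∉ tsupport φ → φ x = 0 := fun x hx =>
    image_eq_zero_of_notMem_tsupport hx
  have hfzero : ∀ x, x ∉ tsupport φ → fderiv ℝ φ x = 0 := by
    intro x hx
    by_contra h
    exact hx (support_fderiv_subset ℝ (by simpa [Function.mem_support] using h))
  have hwpos : ∀ x ∈ tsupport φ, (0:ℝ) < ∏ i, x i := fun x hx =>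
    Finset.prod_pos fun i _ => (hφΩ hx).2 i
  have hxR : ∀ x ∈ tsupport φ, ‖x‖ ≤ R := by
    intro x hx
    have := (hφΩ hx).1
    rw [mem_ball_zero_iff] at this
    exact this.le
  have hgradnorm : ∀ x, ‖gradient φ x‖ = ‖fderiv ℝ φ x‖ := fun x =>
    (InnerProductSpace.toDual ℝ _).symm.norm_map _
  -- reduce to integrals over the whole space
  simp only [hgradnorm]
  rw [setIntegral_eq_integral_of_forall_compl_eq_zero
      (f := fun x : EuclideanSpace ℝ (Fin n) => (∏ i, x i) * ‖fderiv ℝ φ x‖ ^ p)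
      (fun x hx => by
        have hx' : x ∉ tsupport φ := fun h => hx (hφΩ h)
        simp [hfzero x hx', zero_rpow hp0.ne']),
    setIntegral_eq_integral_of_forall_compl_eq_zero
      (f := fun x : EuclideanSpace ℝ (Fin n) => (∏ i, x i) * |φ x| ^ p)
      (fun x hx => by
        have hx' : x ∉ tsupport φ := fun h => hx (hφΩ h)
        simp [hzero x hx', zero_rpow hp0.ne'])]
  set A : ℝ := ∫ x : EuclideanSpace ℝ (Fin n), (∏ i, x i) * ‖fderiv ℝ φ x‖ ^ p with hAdef
  set B : ℝ := ∫ x : EuclideanSpace ℝ (Fin n), (∏ i, x i) * |φ x| ^ p with hBdef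
  -- continuity toolkit
  have hcw : Continuous fun x : EuclideanSpace ℝ (Fin n) => ∏ i, x i :=
    (auxProdCD Finset.univ).continuous
  have hcfd : Continuous fun x => fderiv ℝ φ x := hφ.continuous_fderiv (by simp)
  have hcoord : ∀ i, Continuous fun x : EuclideanSpace ℝ (Fin n) => x i := fun i =>
    (EuclideanSpace.proj (𝕜 := ℝ) i).continuous
  have hG'cont : Continuous fun t : ℝ => p * |t| ^ (p - 2) * t := by
    have h1 : ContDiff ℝ 1 (fun t : ℝ => ‖t‖ ^ p) := contDiff_norm_rpow hp
    have h2 := h1.continuous_deriv le_rfl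
    have h3 : deriv (fun t : ℝ => ‖t‖ ^ p) = fun t => p * |t| ^ (p - 2) * t := by
      funext t
      rw [(hasDerivAt_norm_rpow t hp).deriv]
      simp [Real.norm_eq_abs]
    rwa [h3] at h2
  have hG'φ : Continuous fun x => p * |φ x| ^ (p - 2) * φ x := hG'cont.comp hφ.continuous
  have hfdapp : ∀ v : EuclideanSpace ℝ (Fin n), Continuous fun x => fderiv ℝ φ x v :=
    fun v => hcfd.clm_apply continuous_const
  have hfdself : Continuous fun x => fderiv ℝ φ x x := hcfd.clm_apply continuous_id
  have habsP : Continuous fun x : EuclideanSpace ℝ (Fin n) => |φ x| ^ p :=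
    (hφ.continuous.abs).rpow_const fun x => Or.inr hp0.le
  have habsP1 : Continuous fun x : EuclideanSpace ℝ (Fin n) => |φ x| ^ (p - 1) :=
    (hφ.continuous.abs).rpow_const fun x => Or.inr hp1.le
  -- integrability toolkit
  have hInt : ∀ {f : EuclideanSpace ℝ (Fin n) → ℝ}, Continuous f →
      (∀ x, x ∉ tsupport φ → f x = 0) → Integrable f := fun {f} hf h0 =>
    hf.integrable_of_hasCompactSupport (HasCompactSupport.intro hφc h0)
  have hMem : ∀ {f : EuclideanSpace ℝ (Fin n) → ℝ} {r : ENNReal}, Continuous f →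
      (∀ x, x ∉ tsupport φ → f x = 0) → MemLp f r volume := fun {f} {r} hf h0 =>
    hf.memLp_of_hasCompactSupport (HasCompactSupport.intro hφc h0)
  -- the derivative computation (divergence of the vector field)
  have habsCD : ContDiff ℝ 1 fun x : EuclideanSpace ℝ (Fin n) => |φ x| ^ p := by
    have := (hφ.of_le (by simp) : ContDiff ℝ 1 φ).norm_rpow hp
    simpa [Real.norm_eq_abs] using this
  have hproj : ∀ (i : Fin n) (x : EuclideanSpace ℝ (Fin n)),
      HasFDerivAt (fun y : EuclideanSpace ℝ (Fin n) => y i)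
        (EuclideanSpace.proj i : EuclideanSpace ℝ (Fin n) →L[ℝ] ℝ) x :=
    fun i x => (EuclideanSpace.proj (𝕜 := ℝ) i).hasFDerivAt
  have hwD : ∀ x : EuclideanSpace ℝ (Fin n),
      HasFDerivAt (fun y : EuclideanSpace ℝ (Fin n) => ∏ j, y j)
        (∑ j, (∏ k ∈ Finset.univ.erase j, x k) •
          (EuclideanSpace.proj j : EuclideanSpace ℝ (Fin n) →L[ℝ] ℝ)) x :=
    fun x => HasFDerivAt.finset_prod (fun j _ => hproj j x)
  have hGd : ∀ x, HasFDerivAt (fun y : EuclideanSpace ℝ (Fin n) => |φ y| ^ p)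
      ((p * |φ x| ^ (p - 2) * φ x) • fderiv ℝ φ x) x := fun x =>
    (hasDerivAt_abs_rpow (φ x) hp).comp_hasFDerivAt x ((hφ.differentiable (by simp)) x).hasFDerivAt
  have hΨd : ∀ (i : Fin n) x,
      HasFDerivAt (fun y : EuclideanSpace ℝ (Fin n) => ((∏ j, y j) * y i) * |φ y| ^ p)
      (((∏ j, x j) * x i) • ((p * |φ x| ^ (p - 2) * φ x) • fderiv ℝ φ x)
        + (|φ x| ^ p) • ((∏ j, x j) •
            (EuclideanSpace.proj i : EuclideanSpace ℝ (Fin n) →L[ℝ] ℝ)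
            + x i • ∑ j, (∏ k ∈ Finset.univ.erase j, x k) •
              (EuclideanSpace.proj j : EuclideanSpace ℝ (Fin n) →L[ℝ] ℝ))) x :=
    fun i x => ((hwD x).mul (hproj i x)).mul (hGd x)
  have heval : ∀ (i : Fin n) x,
      fderiv ℝ (fun y : EuclideanSpace ℝ (Fin n) => ((∏ j, y j) * y i) * |φ y| ^ p) x
        (EuclideanSpace.single i 1)
      = ((∏ j, x j) * x i) *
          ((p * |φ x| ^ (p - 2) * φ x) * fderiv ℝ φ x (EuclideanSpace.single i 1))
        + |φ x| ^ p * (2 * ∏ j, x j) := by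
    intro i x
    rw [(hΨd i x).fderiv]
    simp only [ContinuousLinearMap.add_apply, ContinuousLinearMap.smul_apply,
      ContinuousLinearMap.coe_sum', Finset.sum_apply, smul_eq_mul,
      PiLp.proj_apply, EuclideanSpace.single_apply, eq_self_iff_true, if_true]
    rw [Finset.sum_congr rfl (fun j _ => by rw [mul_ite, mul_one, mul_zero]),
      Finset.sum_ite_eq' Finset.univ i (fun j => ∏ k ∈ Finset.univ.erase j, x k),
      if_pos (Finset.mem_univ i),
      Finset.mul_prod_erase Finset.univ _ (Finset.mem_univ i)]
    ring
  -- the integral of each summand of the divergence vanishes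
  have hΨCD : ∀ i : Fin n,
      ContDiff ℝ 1 (fun y : EuclideanSpace ℝ (Fin n) => ((∏ j, y j) * y i) * |φ y| ^ p) := by
    intro i
    have hcoordCD : ContDiff ℝ 1 (fun y : EuclideanSpace ℝ (Fin n) => y i) :=
      (EuclideanSpace.proj (𝕜 := ℝ) i).contDiff
    exact ((auxProdCD Finset.univ).mul hcoordCD).mul habsCD
  have hDzero : ∀ i : Fin n, ∫ x : EuclideanSpace ℝ (Fin n),
      (((∏ j, x j) * x i) *
          ((p * |φ x| ^ (p - 2) * φ x) * fderiv ℝ φ x (EuclideanSpace.single i 1))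
        + |φ x| ^ p * (2 * ∏ j, x j)) = 0 := by
    intro i
    have h := auxIBP (hΨCD i)
      (HasCompactSupport.intro hφc (fun x hx => by
        simp [hzero x hx, zero_rpow hp0.ne'])) (EuclideanSpace.single i 1)
    simpa only [heval i] using h
  have hDint : ∀ i : Fin n, Integrable (fun x : EuclideanSpace ℝ (Fin n) =>
      (((∏ j, x j) * x i) *
          ((p * |φ x| ^ (p - 2) * φ x) * fderiv ℝ φ x (EuclideanSpace.single i 1))
        + |φ x| ^ p * (2 * ∏ j, x j))) := by
    intro i
    refine hInt (((hcw.mul (hcoord i)).mul (hG'φ.mul (hfdapp _))).add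
      (habsP.mul (continuous_const.mul hcw))) (fun x hx => ?_)
    simp [hzero x hx, hfzero x hx, zero_rpow hp0.ne']
  -- representation of x in terms of the standard basis
  have hrepr : ∀ x : EuclideanSpace ℝ (Fin n),
      ∑ i, x i • (EuclideanSpace.single i (1:ℝ)) = x := by
    intro x
    simpa [EuclideanSpace.basisFun_apply, EuclideanSpace.basisFun_repr] using
      (EuclideanSpace.basisFun (Fin n) ℝ).sum_repr x
  have hfdx : ∀ x, fderiv ℝ φ x x = ∑ i, x i * fderiv ℝ φ x (EuclideanSpace.single i 1) := by
    intro x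
    calc fderiv ℝ φ x x = fderiv ℝ φ x (∑ i, x i • EuclideanSpace.single i 1) := by
          rw [hrepr x]
      _ = ∑ i, x i * fderiv ℝ φ x (EuclideanSpace.single i 1) := by
          rw [map_sum]; simp
  -- summing up : the integrated divergence identity
  have hkey : (∫ x : EuclideanSpace ℝ (Fin n),
      (∏ j, x j) * ((p * |φ x| ^ (p - 2) * φ x) * fderiv ℝ φ x x)) + 2 * n * B = 0 := by
    have hsum : ∫ x : EuclideanSpace ℝ (Fin n), (∑ i : Fin n,
        (((∏ j, x j) * x i) *
          ((p * |φ x| ^ (p - 2) * φ x) * fderiv ℝ φ x (EuclideanSpace.single i 1))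
          + |φ x| ^ p * (2 * ∏ j, x j))) = 0 := by
      rw [integral_finset_sum Finset.univ (fun i _ => hDint i)]
      simp [hDzero]
    have hpt : ∀ x : EuclideanSpace ℝ (Fin n), (∑ i : Fin n,
        (((∏ j, x j) * x i) *
          ((p * |φ x| ^ (p - 2) * φ x) * fderiv ℝ φ x (EuclideanSpace.single i 1))
          + |φ x| ^ p * (2 * ∏ j, x j)))
        = (∏ j, x j) * ((p * |φ x| ^ (p - 2) * φ x) * fderiv ℝ φ x x)
          + 2 * n * ((∏ j, x j) * |φ x| ^ p) := by
      intro x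
      rw [Finset.sum_add_distrib]
      congr 1
      · calc ∑ i : Fin n, ((∏ j, x j) * x i) *
              ((p * |φ x| ^ (p - 2) * φ x) * fderiv ℝ φ x (EuclideanSpace.single i 1))
            = ∑ i : Fin n, (∏ j, x j) * ((p * |φ x| ^ (p - 2) * φ x) *
              (x i * fderiv ℝ φ x (EuclideanSpace.single i 1))) :=
          Finset.sum_congr rfl fun i _ => by ring
        _ = (∏ j, x j) * ((p * |φ x| ^ (p - 2) * φ x) * fderiv ℝ φ x x) := by
          rw [hfdx x]
          simp only [Finset.mul_sum]
      · simp only [Finset.sum_const, Finset.card_univ, Fintype.card_fin, nsmul_eq_mul]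
        ring
    calc (∫ x : EuclideanSpace ℝ (Fin n),
        (∏ j, x j) * ((p * |φ x| ^ (p - 2) * φ x) * fderiv ℝ φ x x)) + 2 * n * B
        = ∫ x : EuclideanSpace ℝ (Fin n),
          ((∏ j, x j) * ((p * |φ x| ^ (p - 2) * φ x) * fderiv ℝ φ x x)
            + 2 * n * ((∏ j, x j) * |φ x| ^ p)) := by
          rw [integral_add]
          · rw [integral_const_mul]
          · refine hInt (hcw.mul (hG'φ.mul hfdself)) (fun x hx => ?_)
            simp [hzero x hx, hfzero x hx]
          · exact (hInt (hcw.mul habsP) (fun x hx => by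
              simp [hzero x hx, zero_rpow hp0.ne'])).const_mul _
    _ = 0 := by
          rw [← hsum]
          exact congrArg (integral volume) (funext fun x => (hpt x).symm)

  -- pointwise bound for the integrand
  have honep : 1/p + 1/(p.conjExponent) = 1 := by
    rw [one_div, one_div]
    exact (Real.HolderConjugate.conjExponent hp).inv_add_inv_eq_one
  have hpq : p.HolderConjugate p.conjExponent := Real.HolderConjugate.conjExponent hp
  have hq0 : 0 < p.conjExponent := hpq.symm.pos
  have hbound : ∀ x : EuclideanSpace ℝ (Fin n),
      -((∏ j, x j) * ((p * |φ x| ^ (p - 2) * φ x) * fderiv ℝ φ x x)) ≤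
        (p * R) * ((∏ j, x j) * (|φ x| ^ (p - 1) * ‖fderiv ℝ φ x‖)) := by
    intro x
    by_cases hx : x ∈ tsupport φ
    · have hw := hwpos x hx
      have hRx := hxR x hx
      have h1 : |p * |φ x| ^ (p - 2) * φ x| ≤ p * |φ x| ^ (p - 1) := by
        have e : |p * |φ x| ^ (p - 2) * φ x| = p * (|φ x| ^ (p - 2) * |φ x|) := by
          rw [abs_mul, abs_mul, abs_of_pos hp0,
            abs_of_nonneg (Real.rpow_nonneg (abs_nonneg _) _), mul_assoc]
        rw [e]
        rcases eq_or_ne (φ x) 0 with h0 | h0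
        · simp [h0, zero_rpow hp1.ne']
        · rw [← Real.rpow_add_one (abs_ne_zero.mpr h0), show p - 2 + 1 = p - 1 by ring]
      have h2 : |fderiv ℝ φ x x| ≤ ‖fderiv ℝ φ x‖ * R := by
        have := (fderiv ℝ φ x).le_opNorm x
        rw [Real.norm_eq_abs] at this
        calc |fderiv ℝ φ x x| ≤ ‖fderiv ℝ φ x‖ * ‖x‖ := this
          _ ≤ ‖fderiv ℝ φ x‖ * R := mul_le_mul_of_nonneg_left hRx (norm_nonneg _)
      calc -((∏ j, x j) * ((p * |φ x| ^ (p - 2) * φ x) * fderiv ℝ φ x x))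
          ≤ |(∏ j, x j) * ((p * |φ x| ^ (p - 2) * φ x) * fderiv ℝ φ x x)| := neg_le_abs _
        _ = (∏ j, x j) * (|p * |φ x| ^ (p - 2) * φ x| * |fderiv ℝ φ x x|) := by
            rw [abs_mul, abs_mul, abs_of_pos hw]
        _ ≤ (∏ j, x j) * ((p * |φ x| ^ (p - 1)) * (‖fderiv ℝ φ x‖ * R)) := by
            refine mul_le_mul_of_nonneg_left ?_ hw.le
            exact mul_le_mul h1 h2 (abs_nonneg _) (by positivity)
        _ = (p * R) * ((∏ j, x j) * (|φ x| ^ (p - 1) * ‖fderiv ℝ φ x‖)) := by ring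
    · simp [hzero x hx, hfzero x hx, zero_rpow hp1.ne']
  -- integrate the bound
  have h2nB : 2 * n * B ≤
      (p * R) * ∫ x : EuclideanSpace ℝ (Fin n),
        (∏ i, x i) * (|φ x| ^ (p - 1) * ‖fderiv ℝ φ x‖) := by
    have hT1int : Integrable (fun x : EuclideanSpace ℝ (Fin n) =>
        (∏ j, x j) * ((p * |φ x| ^ (p - 2) * φ x) * fderiv ℝ φ x x)) :=
      hInt (hcw.mul (hG'φ.mul hfdself)) (fun x hx => by simp [hzero x hx, hfzero x hx])
    have hbint : Integrable (fun x : EuclideanSpace ℝ (Fin n) =>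
        (∏ i, x i) * (|φ x| ^ (p - 1) * ‖fderiv ℝ φ x‖)) :=
      hInt (hcw.mul (habsP1.mul hcfd.norm)) (fun x hx => by simp [hfzero x hx])
    have hm := integral_mono hT1int.neg (hbint.const_mul (p * R)) hbound
    simp only [Pi.neg_apply] at hm
    rw [integral_neg, integral_const_mul] at hm
    linarith [hkey]
  -- Hoelder's inequality
  have hf1c : Continuous fun x : EuclideanSpace ℝ (Fin n) =>
      (∏ i, x i) ^ (1/p) * ‖fderiv ℝ φ x‖ :=
    (hcw.rpow_const fun x => Or.inr (by positivity)).mul hcfd.norm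
  have hg1c : Continuous fun x : EuclideanSpace ℝ (Fin n) =>
      (∏ i, x i) ^ (1/p.conjExponent) * |φ x| ^ (p - 1) :=
    (hcw.rpow_const fun x => Or.inr (by positivity)).mul habsP1
  have hf1s : ∀ x, x ∉ tsupport φ →
      (∏ i, x i) ^ (1/p) * ‖fderiv ℝ φ x‖ = 0 := fun x hx => by simp [hfzero x hx]
  have hg1s : ∀ x, x ∉ tsupport φ →
      (∏ i, x i) ^ (1/p.conjExponent) * |φ x| ^ (p - 1) = 0 := fun x hx => by
    simp [hzero x hx, zero_rpow hp1.ne']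
  have hf1nn : ∀ x : EuclideanSpace ℝ (Fin n),
      0 ≤ (∏ i, x i) ^ (1/p) * ‖fderiv ℝ φ x‖ := by
    intro x
    by_cases hx : x ∈ tsupport φ
    · exact mul_nonneg (Real.rpow_nonneg (hwpos x hx).le _) (norm_nonneg _)
    · rw [hf1s x hx]
  have hg1nn : ∀ x : EuclideanSpace ℝ (Fin n),
      0 ≤ (∏ i, x i) ^ (1/p.conjExponent) * |φ x| ^ (p - 1) := by
    intro x
    by_cases hx : x ∈ tsupport φ
    · exact mul_nonneg (Real.rpow_nonneg (hwpos x hx).le _)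
        (Real.rpow_nonneg (abs_nonneg _) _)
    · rw [hg1s x hx]
  have hHolder := integral_mul_le_Lp_mul_Lq_of_nonneg hpq
    (Filter.Eventually.of_forall hf1nn) (Filter.Eventually.of_forall hg1nn)
    (hMem hf1c hf1s) (hMem hg1c hg1s)
  have e1 : (∫ x : EuclideanSpace ℝ (Fin n),
      ((∏ i, x i) ^ (1/p) * ‖fderiv ℝ φ x‖) *
        ((∏ i, x i) ^ (1/p.conjExponent) * |φ x| ^ (p - 1)))
      = ∫ x : EuclideanSpace ℝ (Fin n), (∏ i, x i) * (|φ x| ^ (p - 1) * ‖fderiv ℝ φ x‖) := by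
    refine congrArg (integral volume) (funext fun x => ?_)
    by_cases hx : x ∈ tsupport φ
    · calc ((∏ i, x i) ^ (1/p) * ‖fderiv ℝ φ x‖) *
            ((∏ i, x i) ^ (1/p.conjExponent) * |φ x| ^ (p - 1))
          = ((∏ i, x i) ^ (1/p) * (∏ i, x i) ^ (1/p.conjExponent)) *
            (|φ x| ^ (p - 1) * ‖fderiv ℝ φ x‖) := by ring
        _ = (∏ i, x i) * (|φ x| ^ (p - 1) * ‖fderiv ℝ φ x‖) := by
            rw [← Real.rpow_add (hwpos x hx), honep, Real.rpow_one]
    · simp [hzero x hx, hfzero x hx, zero_rpow hp1.ne']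
  have e2 : (∫ x : EuclideanSpace ℝ (Fin n),
      ((∏ i, x i) ^ (1/p) * ‖fderiv ℝ φ x‖) ^ p) = A := by
    refine congrArg (integral volume) (funext fun x => ?_)
    by_cases hx : x ∈ tsupport φ
    · rw [Real.mul_rpow (Real.rpow_nonneg (hwpos x hx).le _) (norm_nonneg _),
        ← Real.rpow_mul (hwpos x hx).le, one_div_mul_cancel hp0.ne', Real.rpow_one]
    · simp [hfzero x hx, zero_rpow hp0.ne']
  have e3 : (∫ x : EuclideanSpace ℝ (Fin n),
      ((∏ i, x i) ^ (1/p.conjExponent) * |φ x| ^ (p - 1)) ^ p.conjExponent) = B := by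
    refine congrArg (integral volume) (funext fun x => ?_)
    by_cases hx : x ∈ tsupport φ
    · rw [Real.mul_rpow (Real.rpow_nonneg (hwpos x hx).le _)
          (Real.rpow_nonneg (abs_nonneg _) _),
        ← Real.rpow_mul (hwpos x hx).le, one_div_mul_cancel hq0.ne', Real.rpow_one,
        ← Real.rpow_mul (abs_nonneg _), hpq.sub_one_mul_conj]
    · simp [hzero x hx, zero_rpow hp1.ne', zero_rpow hq0.ne', zero_rpow hp0.ne']
  rw [e1] at hHolder
  rw [e2, e3] at hHolder
  have hA0 : 0 ≤ A := by
    rw [hAdef]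
    refine integral_nonneg fun x => ?_
    by_cases hx : x ∈ tsupport φ
    · exact mul_nonneg (hwpos x hx).le (Real.rpow_nonneg (norm_nonneg _) _)
    · simp [hfzero x hx, zero_rpow hp0.ne']
  have hB0 : 0 ≤ B := by
    rw [hBdef]
    refine integral_nonneg fun x => ?_
    by_cases hx : x ∈ tsupport φ
    · exact mul_nonneg (hwpos x hx).le (Real.rpow_nonneg (abs_nonneg _) _)
    · simp [hzero x hx, zero_rpow hp0.ne']
  have hfinal : 2 * n * B ≤ (p * R) * (A ^ (1/p) * B ^ (1/p.conjExponent)) := by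
    calc 2 * n * B ≤ (p * R) * ∫ x : EuclideanSpace ℝ (Fin n),
          (∏ i, x i) * (|φ x| ^ (p - 1) * ‖fderiv ℝ φ x‖) := h2nB
      _ ≤ (p * R) * (A ^ (1/p) * B ^ (1/p.conjExponent)) :=
        mul_le_mul_of_nonneg_left hHolder (by positivity)
  -- conclude
  rcases hB0.eq_or_lt with hB | hB
  · rw [← hB, mul_zero]
    exact hA0
  · have hBq : 0 < B ^ (1/p.conjExponent) := Real.rpow_pos_of_pos hB _
    have hBsplit : B = B ^ (1/p) * B ^ (1/p.conjExponent) := by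
      rw [← Real.rpow_add hB, honep, Real.rpow_one]
    have hstep : (2 * n / (p * R)) * B ^ (1/p) ≤ A ^ (1/p) := by
      rw [div_mul_eq_mul_div, div_le_iff₀ (by positivity : (0:ℝ) < p * R)]
      refine (mul_le_mul_iff_left₀ hBq).mp ?_
      calc (2 * n * B ^ (1/p)) * B ^ (1/p.conjExponent)
          = 2 * n * B := by rw [mul_assoc, ← hBsplit]
        _ ≤ (p * R) * (A ^ (1/p) * B ^ (1/p.conjExponent)) := hfinal
        _ = (A ^ (1/p) * (p * R)) * B ^ (1/p.conjExponent) := by ring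
    have h2 := Real.rpow_le_rpow (by positivity) hstep hp0.le
    rw [Real.mul_rpow (by positivity) (Real.rpow_nonneg hB.le _),
      ← Real.rpow_mul hB.le, one_div_mul_cancel hp0.ne', Real.rpow_one,
      ← Real.rpow_mul hA0, one_div_mul_cancel hp0.ne', Real.rpow_one] at h2
    exact h2
end

section
/- Let n ≥ 2, let Ω be a bounded domain with smooth boundary contained in the first orthant ℝ*^n, and let p > 1. Then for every φ ∈ C_0^∞(Ω), ∫_Ω |x|^p (x_1^p x_2^p ⋯ x_n^p)^{-1} |∇φ|^p dx ≥ (n(p−1)/p)^p ∫_Ω (x_1^p x_2^p ⋯ x_n^p)^{-1} |φ|^p dx, where |x| = (x_1^2 + ⋯ + x_n^2)^{1/2}. -/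
open MeasureTheory Real Filter Topology Metric

lemma integral_fderiv_comp_zero {n : ℕ}
    {g : EuclideanSpace ℝ (Fin n) → ℝ}
    {g' : EuclideanSpace ℝ (Fin n) → (EuclideanSpace ℝ (Fin n) →L[ℝ] ℝ)}
    (hd : ∀ x, HasFDerivAt g (g' x) x) (hc : Continuous g')
    (hsupp : HasCompactSupport g) (v : EuclideanSpace ℝ (Fin n)) :
    (∫ x, g' x v) = 0 := by
  have hgcont : Continuous g :=
    continuous_iff_continuousAt.mpr fun x => (hd x).continuousAt
  have hg'0 : ∀ x, x ∉ tsupport g → g' x = 0 := by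
    intro x hx
    have hev : g =ᶠ[𝓝 x] fun _ => 0 := by
      filter_upwards [(isClosed_tsupport g).isOpen_compl.mem_nhds hx] with y hy
      exact image_eq_zero_of_notMem_tsupport hy
    exact (hd x).unique ((hasFDerivAt_const (0:ℝ) x).congr_of_eventuallyEq hev)
  have hg'supp : HasCompactSupport g' := HasCompactSupport.intro hsupp fun x hx => hg'0 x hx
  obtain ⟨M, hM⟩ := hg'supp.exists_bound_of_continuous hc
  set K : Set (EuclideanSpace ℝ (Fin n)) := cthickening ‖v‖ (tsupport g) with hK
  have hKcomp : IsCompact K := hsupp.cthickening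
  have hbound_int : Integrable (K.indicator fun _ => M * ‖v‖) := by
    rw [integrable_indicator_iff hKcomp.isClosed.measurableSet]
    exact integrableOn_const hKcomp.measure_lt_top.ne
  have key := hasDerivAt_integral_of_dominated_loc_of_deriv_le
    (F := fun (t : ℝ) x => g (x + t • v))
    (F' := fun (t : ℝ) x => g' (x + t • v) v)
    (x₀ := (0:ℝ)) (s := ball (0:ℝ) 1) (bound := K.indicator fun _ => M * ‖v‖)
    (ball_mem_nhds (0:ℝ) one_pos)
    (Eventually.of_forall fun t =>
      ((hgcont.comp (continuous_id.add continuous_const)).aestronglyMeasurable))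
    ((hgcont.integrable_of_hasCompactSupport hsupp).comp_add_right ((0:ℝ) • v))
    (((hc.clm_apply continuous_const).comp
      (continuous_id.add continuous_const)).aestronglyMeasurable)
    (Eventually.of_forall fun x => by
      intro t ht
      by_cases hxK : x ∈ K
      · rw [Set.indicator_of_mem hxK]
        calc ‖g' (x + t • v) v‖ ≤ ‖g' (x + t • v)‖ * ‖v‖ := (g' _).le_opNorm v
          _ ≤ M * ‖v‖ := by gcongr; exact hM _
      · rw [Set.indicator_of_notMem hxK]
        have hnot : x + t • v ∉ tsupport g := by
          intro hmem
          apply hxK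
          apply mem_cthickening_of_dist_le x (x + t • v) _ _ hmem
          rw [dist_eq_norm]
          have heq : ‖x - (x + t • v)‖ = |t| * ‖v‖ := by
            rw [sub_add_cancel_left, norm_neg, norm_smul, Real.norm_eq_abs]
          rw [heq]
          have ht1 : |t| ≤ 1 := by
            have := mem_ball_iff_norm.mp ht
            simp only [sub_zero, Real.norm_eq_abs] at this
            linarith
          nlinarith [norm_nonneg v, abs_nonneg t]
        show ‖g' (x + t • v) v‖ ≤ 0
        rw [hg'0 _ hnot]
        simp)
    hbound_int
    (Eventually.of_forall fun x => by
      intro t ht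
      have h1 : HasDerivAt (fun s : ℝ => x + s • v) v t := by
        simpa using ((hasDerivAt_id t).smul_const v).const_add x
      exact (hd (x + t • v)).comp_hasDerivAt t h1)
  obtain ⟨-, hF⟩ := key
  have hconst : (fun t : ℝ => ∫ x, g (x + t • v)) = fun _ => ∫ x, g x := by
    funext t
    exact integral_add_right_eq_self g (t • v)
  rw [hconst] at hF
  have huniq := hF.unique (hasDerivAt_const 0 _)
  rw [← huniq]
  congr 1
  funext x
  simp

set_option maxHeartbeats 1000000 in
theorem stmt5 (n : ℕ) (hn : 2 ≤ n)
    (Ω : Set (EuclideanSpace ℝ (Fin n)))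
    (hΩo : IsOpen Ω) (hΩc : IsConnected Ω) (hΩb : Bornology.IsBounded Ω)
    (hΩ : Ω ⊆ {x : EuclideanSpace ℝ (Fin n) | ∀ i, 0 < x i})
    (p : ℝ) (hp : 1 < p)
    (φ : EuclideanSpace ℝ (Fin n) → ℝ)
    (hφ : ContDiff ℝ (⊤ : ℕ∞) φ) (hφc : HasCompactSupport φ) (hφΩ : tsupport φ ⊆ Ω) :
    ∫ x in Ω, ‖x‖ ^ p / (∏ i, (x i) ^ p) * ‖gradient φ x‖ ^ p ≥
      (n * (p - 1) / p) ^ p * ∫ x in Ω, |φ x| ^ p / (∏ i, (x i) ^ p) := by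
  classical
  have hp0 : (0:ℝ) < p := by linarith
  have hp1 : (0:ℝ) < p - 1 := by linarith
  have hn0 : (0:ℝ) < (n:ℝ) := by
    have : (0:ℕ) < n := by omega
    exact_mod_cast this
  set c : ℝ := ↑n * (p - 1) / p with hc
  have hcpos : 0 < c := by positivity
  set W : EuclideanSpace ℝ (Fin n) → ℝ :=
    fun x => Real.exp (-(p * ∑ j, Real.log (x j))) with hWdef
  set Φ : EuclideanSpace ℝ (Fin n) → ℝ := fun x => ‖φ x‖ ^ p with hΦdef
  have hφ1 : ContDiff ℝ 1 φ := hφ.of_le (by simp)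
  have hΦ1 : ContDiff ℝ 1 Φ := hφ1.norm_rpow hp
  have hφd : Differentiable ℝ φ := hφ1.differentiable one_ne_zero
  have hΦd : Differentiable ℝ Φ := hΦ1.differentiable one_ne_zero
  have hΦ'c : Continuous (fderiv ℝ Φ) := (contDiff_one_iff_fderiv.mp hΦ1).2
  have hφ'c : Continuous (fderiv ℝ φ) := (contDiff_one_iff_fderiv.mp hφ1).2
  -- basic vanishing facts outside the support
  have hφev : ∀ x, x ∉ tsupport φ → φ =ᶠ[𝓝 x] fun _ => 0 := by
    intro x hx
    filter_upwards [(isClosed_tsupport φ).isOpen_compl.mem_nhds hx] with y hy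
    exact image_eq_zero_of_notMem_tsupport hy
  have hΦev : ∀ x, x ∉ tsupport φ → Φ =ᶠ[𝓝 x] fun _ => 0 := by
    intro x hx
    filter_upwards [hφev x hx] with y hy
    simp only [hΦdef, hy, norm_zero]
    exact Real.zero_rpow hp0.ne'
  have hΦ0 : ∀ x, x ∉ tsupport φ → Φ x = 0 := fun x hx => (hΦev x hx).eq_of_nhds
  have hfφ0 : ∀ x, x ∉ tsupport φ → fderiv ℝ φ x = 0 := by
    intro x hx
    exact (hφd x).hasFDerivAt.unique
      ((hasFDerivAt_const (0:ℝ) x).congr_of_eventuallyEq (hφev x hx))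
  have hfΦ0 : ∀ x, x ∉ tsupport φ → fderiv ℝ Φ x = 0 := by
    intro x hx
    exact (hΦd x).hasFDerivAt.unique
      ((hasFDerivAt_const (0:ℝ) x).congr_of_eventuallyEq (hΦev x hx))
  have hfΦev : ∀ x, x ∉ tsupport φ → fderiv ℝ Φ =ᶠ[𝓝 x] fun _ => 0 := by
    intro x hx
    filter_upwards [(isClosed_tsupport φ).isOpen_compl.mem_nhds hx] with y hy
    exact hfΦ0 y hy
  have hgrad0 : ∀ x, x ∉ tsupport φ → gradient φ x = 0 := by
    intro x hx
    rw [gradient, hfφ0 x hx, map_zero]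
  have hgradev : ∀ x, x ∉ tsupport φ → gradient φ =ᶠ[𝓝 x] fun _ => 0 := by
    intro x hx
    filter_upwards [(isClosed_tsupport φ).isOpen_compl.mem_nhds hx] with y hy
    exact hgrad0 y hy
  have hgradnorm : ∀ x, ‖gradient φ x‖ = ‖fderiv ℝ φ x‖ := by
    intro x
    rw [gradient]
    exact LinearIsometryEquiv.norm_map _ _
  have hgradc : Continuous (gradient φ) := by
    have : gradient φ = fun x =>
        (InnerProductSpace.toDual ℝ (EuclideanSpace ℝ (Fin n))).symm (fderiv ℝ φ x) := by
      funext x; rw [gradient]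
    rw [this]
    exact (InnerProductSpace.toDual ℝ (EuclideanSpace ℝ (Fin n))).symm.continuous.comp hφ'c
  have hcover : ∀ x : EuclideanSpace ℝ (Fin n), x ∈ Ω ∨ x ∉ tsupport φ := by
    intro x
    by_cases h : x ∈ Ω
    · exact Or.inl h
    · exact Or.inr fun hx => h (hφΩ hx)
  have hWpos : ∀ x, 0 < W x := fun x => Real.exp_pos _
  have hne : ∀ x ∈ Ω, ∀ j, x j ≠ 0 := fun x hx j => (hΩ hx j).ne'
  have hWΩ : ∀ x ∈ Ω, ContinuousAt W x := by
    intro x hx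
    apply Real.continuous_exp.continuousAt.comp
    have hsumc : ContinuousAt (fun y : EuclideanSpace ℝ (Fin n) => ∑ j, Real.log (y j)) x := by
      apply tendsto_finset_sum
      intro j _
      have hc1 : ContinuousAt (fun y : EuclideanSpace ℝ (Fin n) => y j) x :=
        (EuclideanSpace.proj j : EuclideanSpace ℝ (Fin n) →L[ℝ] ℝ).continuous.continuousAt
      exact Filter.Tendsto.comp (Real.continuousAt_log (hne x hx j)) hc1
    exact (hsumc.const_mul p).neg
  have hWprod : ∀ x ∈ Ω, (∏ i, (x i) ^ p)⁻¹ = W x := by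
    intro x hx
    have h1 : ∀ i : Fin n, (x i) ^ p = Real.exp (Real.log (x i) * p) := fun i =>
      Real.rpow_def_of_pos (hΩ hx i) p
    rw [Finset.prod_congr rfl fun i _ => h1 i, ← Real.exp_sum, ← Real.exp_neg]
    simp only [hWdef]
    congr 1
    rw [Finset.mul_sum]
    congr 1
    exact Finset.sum_congr rfl fun i _ => mul_comm _ _
  -- integrability helper
  have int_aux : ∀ f : EuclideanSpace ℝ (Fin n) → ℝ,
      (∀ x ∈ Ω, ContinuousAt f x) → (∀ x, x ∉ tsupport φ → f =ᶠ[𝓝 x] fun _ => 0) →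
      Integrable f := by
    intro f hcΩ h0
    have hf0 : ∀ x, x ∉ tsupport φ → f x = 0 := fun x hx => (h0 x hx).eq_of_nhds
    have hcont : Continuous f := by
      rw [continuous_iff_continuousAt]
      intro x
      rcases hcover x with hx | hx
      · exact hcΩ x hx
      · exact continuousAt_const.congr (h0 x hx).symm
    exact hcont.integrable_of_hasCompactSupport
      (HasCompactSupport.intro hφc fun x hx => hf0 x hx)
  -- the vector field and its derivative
  set S : EuclideanSpace ℝ (Fin n) → (EuclideanSpace ℝ (Fin n) →L[ℝ] ℝ) :=
    fun y => ∑ j, (y j)⁻¹ • (EuclideanSpace.proj j : EuclideanSpace ℝ (Fin n) →L[ℝ] ℝ)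
    with hSdef
  set g : Fin n → EuclideanSpace ℝ (Fin n) → ℝ :=
    fun i y => y i * (W y * Φ y) with hgdef
  set g' : Fin n → EuclideanSpace ℝ (Fin n) → (EuclideanSpace ℝ (Fin n) →L[ℝ] ℝ) :=
    fun i y => y i • (W y • fderiv ℝ Φ y + Φ y • ((W y * -p) • S y)) +
      (W y * Φ y) • (EuclideanSpace.proj i : EuclideanSpace ℝ (Fin n) →L[ℝ] ℝ) with hg'def
  have hg'0 : ∀ i x, x ∉ tsupport φ → g' i x = 0 := by
    intro i x hx
    simp [hg'def, hΦ0 x hx, hfΦ0 x hx]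
  have hWd : ∀ x ∈ Ω, HasFDerivAt W ((W x * -p) • S x) x := by
    intro x hx
    have hlog : ∀ j : Fin n, HasFDerivAt (fun y : EuclideanSpace ℝ (Fin n) => Real.log (y j))
        ((x j)⁻¹ • (EuclideanSpace.proj j : EuclideanSpace ℝ (Fin n) →L[ℝ] ℝ)) x :=
      fun j => (Real.hasDerivAt_log (hne x hx j)).comp_hasFDerivAt (h₂ := Real.log) x
        (EuclideanSpace.proj j : EuclideanSpace ℝ (Fin n) →L[ℝ] ℝ).hasFDerivAt
    have hsum : HasFDerivAt (fun y : EuclideanSpace ℝ (Fin n) => ∑ j, Real.log (y j))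
        (S x) x := HasFDerivAt.fun_sum fun j _ => hlog j
    have hL : HasFDerivAt (fun y : EuclideanSpace ℝ (Fin n) => -(p * ∑ j, Real.log (y j)))
        ((-p) • S x) x := by
      have := (hsum.const_mul p).fun_neg
      exact this.congr_fderiv (by ext v; simp)
    have hexp : HasFDerivAt W (Real.exp (-(p * ∑ j, Real.log (x j))) • ((-p) • S x)) x :=
      (Real.hasDerivAt_exp (-(p * ∑ j, Real.log (x j)))).comp_hasFDerivAt (h₂ := Real.exp) x hL
    have heq : Real.exp (-(p * ∑ j, Real.log (x j))) • ((-p) • S x) = (W x * -p) • S x := by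
      rw [smul_smul]
    rw [heq] at hexp
    exact hexp
  have hgd : ∀ i x, HasFDerivAt (g i) (g' i x) x := by
    intro i x
    rcases hcover x with hx | hx
    · have hprod : HasFDerivAt (fun y => W y * Φ y)
          (W x • fderiv ℝ Φ x + Φ x • ((W x * -p) • S x)) x :=
        (hWd x hx).mul (hΦd x).hasFDerivAt
      have hxi : HasFDerivAt (fun y : EuclideanSpace ℝ (Fin n) => y i)
          (EuclideanSpace.proj i : EuclideanSpace ℝ (Fin n) →L[ℝ] ℝ) x :=
        (EuclideanSpace.proj i : EuclideanSpace ℝ (Fin n) →L[ℝ] ℝ).hasFDerivAt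
      exact hxi.mul hprod
    · have hev : g i =ᶠ[𝓝 x] fun _ => 0 := by
        filter_upwards [hΦev x hx] with y hy
        simp [hgdef, hy]
      rw [hg'0 i x hx]
      exact (hasFDerivAt_const (0:ℝ) x).congr_of_eventuallyEq hev
  have hg'c : ∀ i, Continuous (g' i) := by
    intro i
    rw [continuous_iff_continuousAt]
    intro x
    rcases hcover x with hx | hx
    · have hS : ContinuousAt S x := by
        apply tendsto_finset_sum
        intro j _
        have hc1 : ContinuousAt (fun y : EuclideanSpace ℝ (Fin n) => y j) x :=
          (EuclideanSpace.proj j : EuclideanSpace ℝ (Fin n) →L[ℝ] ℝ).continuous.continuousAt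
        exact (hc1.inv₀ (hne x hx j)).smul continuousAt_const
      have hΦc : ContinuousAt Φ x := hΦ1.continuous.continuousAt
      have hxi : ContinuousAt (fun y : EuclideanSpace ℝ (Fin n) => y i) x :=
        (EuclideanSpace.proj i : EuclideanSpace ℝ (Fin n) →L[ℝ] ℝ).continuous.continuousAt
      exact (hxi.smul (((hWΩ x hx).smul hΦ'c.continuousAt).add
        (hΦc.smul (((hWΩ x hx).mul continuousAt_const).smul hS)))).add
        (((hWΩ x hx).mul hΦc).smul continuousAt_const)
    · have hev : g' i =ᶠ[𝓝 x] fun _ => 0 := by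
        filter_upwards [(isClosed_tsupport φ).isOpen_compl.mem_nhds hx] with y hy
        exact hg'0 i y hy
      exact continuousAt_const.congr hev.symm
  have hgsupp : ∀ i, HasCompactSupport (g i) := by
    intro i
    apply HasCompactSupport.intro hφc
    intro x hx
    simp [hgdef, hΦ0 x hx]
  -- integral of each divergence term is zero
  have hzero : ∀ i, (∫ x, g' i x (EuclideanSpace.single i 1)) = 0 := fun i =>
    integral_fderiv_comp_zero (hgd i) (hg'c i) (hgsupp i) _
  have hint_i : ∀ i, Integrable (fun x => g' i x (EuclideanSpace.single i 1)) := by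
    intro i
    apply ((hg'c i).clm_apply continuous_const).integrable_of_hasCompactSupport
    apply HasCompactSupport.intro hφc
    intro x hx
    rw [hg'0 i x hx]
    simp
  -- pointwise divergence computation
  have hbasis : ∀ x : EuclideanSpace ℝ (Fin n), ∀ L : EuclideanSpace ℝ (Fin n) →L[ℝ] ℝ,
      ∑ i, x i * L (EuclideanSpace.single i 1) = L x := by
    intro x L
    have h : (∑ i, x i • EuclideanSpace.single i (1:ℝ)) = x := by
      have := (EuclideanSpace.basisFun (Fin n) ℝ).sum_repr x
      simpa [EuclideanSpace.basisFun_repr, EuclideanSpace.basisFun_apply] using this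
    conv_rhs => rw [← h]
    rw [map_sum]
    simp
  have hSx : ∀ (x : EuclideanSpace ℝ (Fin n)) (i : Fin n),
      S x (EuclideanSpace.single i 1) = (x i)⁻¹ := by
    intro x i
    simp only [hSdef]
    rw [ContinuousLinearMap.sum_apply]
    simp only [ContinuousLinearMap.smul_apply, PiLp.proj_apply,
      EuclideanSpace.single_apply, smul_eq_mul, mul_ite, mul_one, mul_zero]
    simp [eq_comm]
  have hproji : ∀ i : Fin n, (EuclideanSpace.proj i : EuclideanSpace ℝ (Fin n) →L[ℝ] ℝ)
      (EuclideanSpace.single i 1) = 1 := by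
    intro i
    simp [EuclideanSpace.single_apply]
  have hterm : ∀ x i, g' i x (EuclideanSpace.single i 1) =
      x i * (W x * fderiv ℝ Φ x (EuclideanSpace.single i 1)) +
      (x i * (x i)⁻¹) * (Φ x * (W x * -p)) + W x * Φ x := by
    intro x i
    simp only [hg'def, ContinuousLinearMap.add_apply, ContinuousLinearMap.smul_apply,
      hSx x i, hproji i, smul_eq_mul]
    ring
  have hsum_eval : ∀ x, (∑ i, g' i x (EuclideanSpace.single i 1)) =
      W x * fderiv ℝ Φ x x + (↑n * (1 - p)) * (W x * Φ x) := by
    intro x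
    rw [Finset.sum_congr rfl fun i _ => hterm x i]
    rw [Finset.sum_add_distrib, Finset.sum_add_distrib]
    have h1 : ∑ i, x i * (W x * fderiv ℝ Φ x (EuclideanSpace.single i 1)) =
        W x * fderiv ℝ Φ x x := by
      rw [← hbasis x (fderiv ℝ Φ x), Finset.mul_sum]
      exact Finset.sum_congr rfl fun i _ => by ring
    have h3 : (∑ _i : Fin n, W x * Φ x) = ↑n * (W x * Φ x) := by
      rw [Finset.sum_const, Finset.card_univ, Fintype.card_fin, nsmul_eq_mul]
    rcases hcover x with hx | hx
    · have h2 : ∑ i, (x i * (x i)⁻¹) * (Φ x * (W x * -p)) =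
          ↑n * (Φ x * (W x * -p)) := by
        have : ∀ i : Fin n, (x i * (x i)⁻¹) * (Φ x * (W x * -p)) = Φ x * (W x * -p) := by
          intro i
          rw [mul_inv_cancel₀ (hne x hx i), one_mul]
        rw [Finset.sum_congr rfl fun i _ => this i, Finset.sum_const, Finset.card_univ,
          Fintype.card_fin, nsmul_eq_mul]
      rw [h1, h2, h3]
      ring
    · have hΦx : Φ x = 0 := hΦ0 x hx
      have hfx : fderiv ℝ Φ x = 0 := hfΦ0 x hx
      rw [h1, h3, hΦx, hfx]
      simp
  have hdiv : (∫ x, (W x * fderiv ℝ Φ x x + (↑n * (1 - p)) * (W x * Φ x))) = 0 := by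
    have h1 : (fun x => W x * fderiv ℝ Φ x x + (↑n * (1 - p)) * (W x * Φ x)) =
        fun x => ∑ i, g' i x (EuclideanSpace.single i 1) := by
      funext x
      exact (hsum_eval x).symm
    rw [h1, integral_finset_sum _ fun i _ => hint_i i]
    simp only [hzero]
    simp
  -- integrability of the pieces
  have hint2 : Integrable (fun x => W x * Φ x) := by
    apply int_aux
    · intro x hx
      exact (hWΩ x hx).mul hΦ1.continuous.continuousAt
    · intro x hx
      filter_upwards [hΦev x hx] with y hy
      simp [hy]
  have hint1 : Integrable (fun x => W x * fderiv ℝ Φ x x) := by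
    apply int_aux
    · intro x hx
      exact (hWΩ x hx).mul (hΦ'c.clm_apply continuous_id).continuousAt
    · intro x hx
      filter_upwards [hfΦev x hx] with y hy
      simp [hy]
  have hintA : Integrable (fun x => W x * (‖x‖ ^ p * ‖gradient φ x‖ ^ p)) := by
    apply int_aux
    · intro x hx
      have hnormp : Continuous fun x : EuclideanSpace ℝ (Fin n) => ‖x‖ ^ p :=
        continuous_norm.rpow_const fun x => Or.inr hp0.le
      have hgp : Continuous fun x : EuclideanSpace ℝ (Fin n) => ‖gradient φ x‖ ^ p :=
        (continuous_norm.comp hgradc).rpow_const fun x => Or.inr hp0.le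
      exact (hWΩ x hx).mul (hnormp.continuousAt.mul hgp.continuousAt)
    · intro x hx
      filter_upwards [hgradev x hx] with y hy
      simp only [hy, norm_zero]
      rw [Real.zero_rpow hp0.ne']
      simp
  set A : ℝ := ∫ x, W x * (‖x‖ ^ p * ‖gradient φ x‖ ^ p) with hA
  set B : ℝ := ∫ x, W x * Φ x with hB
  have hABint : ↑n * (p - 1) * B = ∫ x, W x * fderiv ℝ Φ x x := by
    have hd := hdiv
    rw [integral_add hint1 (hint2.const_mul _), integral_const_mul] at hd
    have hk : (↑n : ℝ) * (p - 1) = -(↑n * (1 - p)) := by ring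
    rw [hk]
    linarith [hd]
  -- Young's inequality pointwise
  set q : ℝ := p / (p - 1) with hq
  have hpq : p.HolderConjugate q := Real.HolderConjugate.conjExponent hp
  have hq0 : 0 < q := hpq.symm.pos
  set ε : ℝ := c ^ (-(p - 1) / p) with hε
  have hεpos : 0 < ε := Real.rpow_pos_of_pos hcpos _
  have hpq1 : (p - 1) * q = p := by
    rw [hq]
    field_simp
  have hpdivq : p / q = p - 1 := by
    rw [hq]
    rw [div_div_eq_mul_div, mul_comm, mul_div_assoc, div_self hp0.ne', mul_one]
  have hyoung : ∀ x, W x * fderiv ℝ Φ x x ≤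
      ε ^ p * (W x * (‖x‖ ^ p * ‖gradient φ x‖ ^ p)) +
      ((p - 1) * (ε⁻¹) ^ q) * (W x * Φ x) := by
    intro x
    have ha : 0 ≤ ε * (‖x‖ * ‖gradient φ x‖) := by positivity
    have hb : 0 ≤ ε⁻¹ * ‖φ x‖ ^ (p - 1) := by positivity
    have hyy := Real.young_inequality_of_nonneg ha hb hpq
    have hab : (ε * (‖x‖ * ‖gradient φ x‖)) * (ε⁻¹ * ‖φ x‖ ^ (p - 1)) =
        ‖x‖ * ‖gradient φ x‖ * ‖φ x‖ ^ (p - 1) := by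
      field_simp
    have h1 : fderiv ℝ Φ x x ≤ ‖fderiv ℝ Φ x‖ * ‖x‖ :=
      (le_abs_self _).trans ((fderiv ℝ Φ x).le_opNorm x)
    have h2 : ‖fderiv ℝ Φ x‖ ≤ p * ‖φ x‖ ^ (p - 1) * ‖fderiv ℝ φ x‖ :=
      norm_fderiv_norm_rpow_le hφd hp
    have h3 : fderiv ℝ Φ x x ≤ p * (‖x‖ * ‖gradient φ x‖ * ‖φ x‖ ^ (p - 1)) := by
      calc fderiv ℝ Φ x x ≤ ‖fderiv ℝ Φ x‖ * ‖x‖ := h1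
        _ ≤ (p * ‖φ x‖ ^ (p - 1) * ‖fderiv ℝ φ x‖) * ‖x‖ := by
            apply mul_le_mul_of_nonneg_right h2 (norm_nonneg _)
        _ = p * (‖x‖ * ‖gradient φ x‖ * ‖φ x‖ ^ (p - 1)) := by
            rw [hgradnorm x]; ring
    have h4 : fderiv ℝ Φ x x ≤ p * ((ε * (‖x‖ * ‖gradient φ x‖)) ^ p / p +
        (ε⁻¹ * ‖φ x‖ ^ (p - 1)) ^ q / q) := by
      calc fderiv ℝ Φ x x ≤ p * (‖x‖ * ‖gradient φ x‖ * ‖φ x‖ ^ (p - 1)) := h3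
        _ = p * ((ε * (‖x‖ * ‖gradient φ x‖)) * (ε⁻¹ * ‖φ x‖ ^ (p - 1))) := by rw [hab]
        _ ≤ _ := by
            apply mul_le_mul_of_nonneg_left hyy hp0.le
    have hea : (ε * (‖x‖ * ‖gradient φ x‖)) ^ p = ε ^ p * (‖x‖ ^ p * ‖gradient φ x‖ ^ p) := by
      rw [Real.mul_rpow hεpos.le (by positivity), Real.mul_rpow (norm_nonneg _) (norm_nonneg _)]
    have heb : (ε⁻¹ * ‖φ x‖ ^ (p - 1)) ^ q = (ε⁻¹) ^ q * Φ x := by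
      rw [Real.mul_rpow (by positivity) (by positivity),
        ← Real.rpow_mul (norm_nonneg _), hpq1]
    have hgen : ∀ X Y : ℝ, p * (X / p + Y / q) = X + (p - 1) * Y := by
      intro X Y
      rw [← hpdivq]
      field_simp
    have h6 : fderiv ℝ Φ x x ≤
        ε ^ p * (‖x‖ ^ p * ‖gradient φ x‖ ^ p) + ((p - 1) * (ε⁻¹) ^ q) * Φ x := by
      calc fderiv ℝ Φ x x ≤ p * ((ε * (‖x‖ * ‖gradient φ x‖)) ^ p / p +
          (ε⁻¹ * ‖φ x‖ ^ (p - 1)) ^ q / q) := h4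
        _ = (ε * (‖x‖ * ‖gradient φ x‖)) ^ p +
            (p - 1) * (ε⁻¹ * ‖φ x‖ ^ (p - 1)) ^ q := hgen _ _
        _ = ε ^ p * (‖x‖ ^ p * ‖gradient φ x‖ ^ p) + ((p - 1) * (ε⁻¹) ^ q) * Φ x := by
            rw [hea, heb]; ring
    calc W x * fderiv ℝ Φ x x ≤
        W x * (ε ^ p * (‖x‖ ^ p * ‖gradient φ x‖ ^ p) + ((p - 1) * (ε⁻¹) ^ q) * Φ x) :=
          mul_le_mul_of_nonneg_left h6 (hWpos x).le
      _ = ε ^ p * (W x * (‖x‖ ^ p * ‖gradient φ x‖ ^ p)) +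
          ((p - 1) * (ε⁻¹) ^ q) * (W x * Φ x) := by ring
  have hmono : ↑n * (p - 1) * B ≤ ε ^ p * A + ((p - 1) * (ε⁻¹) ^ q) * B := by
    rw [hABint]
    calc (∫ x, W x * fderiv ℝ Φ x x) ≤
        ∫ x, (ε ^ p * (W x * (‖x‖ ^ p * ‖gradient φ x‖ ^ p)) +
          ((p - 1) * (ε⁻¹) ^ q) * (W x * Φ x)) := by
          apply integral_mono hint1 _ hyoung
          exact (hintA.const_mul _).add (hint2.const_mul _)
      _ = ε ^ p * A + ((p - 1) * (ε⁻¹) ^ q) * B := by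
          rw [integral_add (hintA.const_mul _) (hint2.const_mul _),
            integral_const_mul, integral_const_mul]
  -- algebra with the optimal ε
  have hεinv : (ε⁻¹) ^ q = c := by
    have h1 : ε⁻¹ = c ^ ((p - 1) / p) := by
      rw [hε, neg_div, Real.rpow_neg hcpos.le, inv_inv]
    rw [h1, ← Real.rpow_mul hcpos.le]
    have h2 : (p - 1) / p * q = 1 := by
      rw [hq]
      field_simp
    rw [h2, Real.rpow_one]
  have hεp : ε ^ p = c ^ (1 - p) := by
    rw [hε, ← Real.rpow_mul hcpos.le]
    congr 1
    field_simp
    ring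
  have hfinal : c ^ p * B ≤ A := by
    rw [hεinv, hεp] at hmono
    have hid : ↑n * (p - 1) = (p - 1) * c + c := by
      rw [hc]; field_simp; ring
    have hid2 : ↑n * (p - 1) * B = (p - 1) * c * B + c * B := by
      rw [hid]; ring
    have h3 : c * B ≤ c ^ (1 - p) * A := by linarith [hmono, hid2]
    have h4 : c ^ (p - 1) * (c * B) ≤ c ^ (p - 1) * (c ^ (1 - p) * A) :=
      mul_le_mul_of_nonneg_left h3 (Real.rpow_nonneg hcpos.le _)
    have h5 : c ^ (p - 1) * c = c ^ p := by
      nth_rewrite 2 [← Real.rpow_one c]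
      rw [← Real.rpow_add hcpos]
      ring_nf
    have h6 : c ^ (p - 1) * c ^ (1 - p) = 1 := by
      rw [← Real.rpow_add hcpos]
      norm_num
    rw [← mul_assoc, h5] at h4
    rw [← mul_assoc, h6, one_mul] at h4
    exact h4
  -- convert the set integrals
  have hnotin : ∀ x, x ∉ Ω → x ∉ tsupport φ := by
    intro x hx hmem
    exact hx (hφΩ hmem)
  have hAeq : (∫ x in Ω, ‖x‖ ^ p / (∏ i, (x i) ^ p) * ‖gradient φ x‖ ^ p) = A := by
    rw [hA]
    rw [setIntegral_congr_fun hΩo.measurableSet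
      (g := fun x => W x * (‖x‖ ^ p * ‖gradient φ x‖ ^ p))
      (fun x hx => by
        show ‖x‖ ^ p / (∏ i, (x i) ^ p) * ‖gradient φ x‖ ^ p =
          W x * (‖x‖ ^ p * ‖gradient φ x‖ ^ p)
        rw [← hWprod x hx]; ring)]
    apply setIntegral_eq_integral_of_forall_compl_eq_zero
    intro x hx
    rw [hgrad0 x (hnotin x hx)]
    simp only [norm_zero]
    rw [Real.zero_rpow hp0.ne']
    simp
  have hBeq : (∫ x in Ω, |φ x| ^ p / (∏ i, (x i) ^ p)) = B := by
    rw [hB]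
    rw [setIntegral_congr_fun hΩo.measurableSet
      (g := fun x => W x * Φ x)
      (fun x hx => by
        show |φ x| ^ p / (∏ i, (x i) ^ p) = W x * Φ x
        rw [← hWprod x hx]
        simp only [hΦdef, Real.norm_eq_abs]
        ring)]
    apply setIntegral_eq_integral_of_forall_compl_eq_zero
    intro x hx
    rw [hΦ0 x (hnotin x hx)]
    simp
  rw [ge_iff_le, hAeq, hBeq]
  exact hfinal
end
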